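/- If a numerical semigroup S has a unique Betti element, i.e. its minimal generators are g_i = Π_{j≠i} a_j for pairwise coprime integers a_1 > a_2 > ... > a_ν > 1, then S has α-rectangular Apéry set. -/

import Mathlib

/-- A numerical semigroup: a subset of ℕ containing 0, closed under addition,
with finite complement. -/
structure NumSgp where
  carrier : Set ℕ
  zero_mem : 0 ∈ carrier
  add_mem : ∀ a ∈ carrier, ∀ b ∈ carrier, a + b ∈ carrier
  cofinite : Set.Finite carrierᶜ

namespace NumSgp

/-- The multiplicity: the smallest positive element. -/
noncomputable def mult (S : NumSgp) : ℕ := sInf {s | s ∈ S.carrier ∧ s ≠ 0}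

/-- The Apéry set of `S` with respect to `n`: elements `s ∈ S` with `s - n ∉ S`. -/
def Apery (S : NumSgp) (n : ℕ) : Set ℕ :=
  {s | s ∈ S.carrier ∧ ¬ ∃ t ∈ S.carrier, s = t + n}

/-- `s ⪯ t` : there is `u ∈ S` with `t = s + u`. -/
def sle (S : NumSgp) (s t : ℕ) : Prop := ∃ u ∈ S.carrier, t = s + u

/-- Membership for integers. -/
def memZ (S : NumSgp) (x : ℤ) : Prop := ∃ n ∈ S.carrier, (n : ℤ) = x

/-- `f` is the Frobenius number of `S`: the largest integer not in `S`. -/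
def IsFrob (S : NumSgp) (f : ℤ) : Prop := ¬ S.memZ f ∧ ∀ x : ℤ, f < x → S.memZ x

/-- `S` is symmetric: `x ∈ S ↔ f - x ∉ S` for all integers `x`. -/
def Symm (S : NumSgp) : Prop :=
  ∃ f : ℤ, S.IsFrob f ∧ ∀ x : ℤ, S.memZ x ↔ ¬ S.memZ (f - x)

/-- `s` is a minimal generator (irreducible element) of `S`. -/
def IsMinGen (S : NumSgp) (s : ℕ) : Prop :=
  s ∈ S.carrier ∧ s ≠ 0 ∧
    ¬ ∃ a ∈ S.carrier, ∃ b ∈ S.carrier, a ≠ 0 ∧ b ≠ 0 ∧ s = a + b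

/-- `g : Fin ν → ℕ` enumerates the minimal generators in increasing order. -/
def MinGens (S : NumSgp) {ν : ℕ} (g : Fin ν → ℕ) : Prop :=
  StrictMono g ∧ Set.range g = {s | S.IsMinGen s}

/-- The order of `s`: the maximal total coefficient sum over representations of `s`
in terms of the generators `g`. -/
noncomputable def ord {ν : ℕ} (g : Fin ν → ℕ) (s : ℕ) : ℕ :=
  sSup {k | ∃ lam : Fin ν → ℕ, s = ∑ i, lam i * g i ∧ k = ∑ i, lam i}

/-- `s` has a unique representation in terms of the generators `g`. -/
def UniqueRep {ν : ℕ} (g : Fin ν → ℕ) (s : ℕ) : Prop :=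
  ∃! lam : Fin ν → ℕ, s = ∑ i, lam i * g i

/-- `s` has a unique maximal representation in terms of the generators `g`. -/
def UniqueMaxRep {ν : ℕ} (g : Fin ν → ℕ) (s : ℕ) : Prop :=
  ∃! lam : Fin ν → ℕ, s = ∑ i, lam i * g i ∧ ∑ i, lam i = ord g s

/-- The submonoid of ℕ generated by the generators `g j` with `j < i`. -/
def genBy {ν : ℕ} (g : Fin ν → ℕ) (i : Fin ν) : Set ℕ :=
  {s | ∃ lam : Fin ν → ℕ, (∀ j, ¬ j < i → lam j = 0) ∧ s = ∑ j, lam j * g j}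

/-- `τ_i = min {h | h·g_i ∈ ⟨g_1, …, g_{i-1}⟩} - 1`. -/
noncomputable def tau {ν : ℕ} (g : Fin ν → ℕ) (i : Fin ν) : ℕ :=
  sInf {h | h * g i ∈ genBy g i} - 1

/-- `α_i = max {h | h·g_i ∈ Ap(S, m)}`. -/
noncomputable def alpha (S : NumSgp) {ν : ℕ} (g : Fin ν → ℕ) (i : Fin ν) : ℕ :=
  sSup {h | h * g i ∈ S.Apery S.mult}

/-- `β_i = max {h | h·g_i ∈ Ap(S, m) and ord(h·g_i) = h}`. -/
noncomputable def beta (S : NumSgp) {ν : ℕ} (g : Fin ν → ℕ) (i : Fin ν) : ℕ :=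
  sSup {h | h * g i ∈ S.Apery S.mult ∧ ord g (h * g i) = h}

/-- `γ_i`. -/
noncomputable def gamma (S : NumSgp) {ν : ℕ} (g : Fin ν → ℕ) (i : Fin ν) : ℕ :=
  sSup {h | h * g i ∈ S.Apery S.mult ∧ ord g (h * g i) = h ∧ UniqueMaxRep g (h * g i)}

/-- The "rectangle" `{Σ_{i ≥ 2} λ_i g_i | 0 ≤ λ_i ≤ c_i}` (indices here start at 0,
the first generator does not appear). -/
def rect {ν : ℕ} (g c : Fin ν → ℕ) : Set ℕ :=
  {s | ∃ lam : Fin ν → ℕ, (∀ i, i.val = 0 → lam i = 0) ∧ (∀ i, lam i ≤ c i) ∧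
    s = ∑ i, lam i * g i}

/-- `Π_{i ≥ 2} (c_i + 1)` (the first index excluded). -/
def piProd {ν : ℕ} (c : Fin ν → ℕ) : ℕ :=
  ∏ i ∈ Finset.univ.filter (fun i : Fin ν => i.val ≠ 0), (c i + 1)

/-- `S` is telescopic. -/
def Telescopic (S : NumSgp) : Prop :=
  ∃ (ν : ℕ) (g : Fin ν → ℕ), S.MinGens g ∧ S.Apery S.mult = rect g (tau g)

/-- `S` has α-rectangular Apéry set. -/
def AlphaRect (S : NumSgp) : Prop :=
  ∃ (ν : ℕ) (g : Fin ν → ℕ), S.MinGens g ∧ S.Apery S.mult = rect g (S.alpha g)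

/-- `S` has γ-rectangular Apéry set. -/
def GammaRect (S : NumSgp) : Prop :=
  ∃ (ν : ℕ) (g : Fin ν → ℕ), S.MinGens g ∧ S.Apery S.mult = rect g (S.gamma g)

/-- `S` is associated to a plane branch: telescopic and `(τ_i+1) g_i < g_{i+1}`. -/
def PlaneBranch (S : NumSgp) : Prop :=
  ∃ (ν : ℕ) (g : Fin ν → ℕ), S.MinGens g ∧ S.Apery S.mult = rect g (tau g) ∧
    ∀ i : Fin ν, 1 ≤ i.val → ∀ h : i.val + 1 < ν, (tau g i + 1) * g i < g ⟨i.val + 1, h⟩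

/-- `S` is free: for some rearrangement `n` of the minimal generators,
`Ap(S, n_1) = {Σ_{i ≥ 2} λ_i n_i | 0 ≤ λ_i ≤ φ_i}`. -/
def Free (S : NumSgp) : Prop :=
  ∃ (ν : ℕ) (hν : 0 < ν) (n : Fin ν → ℕ), Function.Injective n ∧
    Set.range n = {s | S.IsMinGen s} ∧ S.Apery (n ⟨0, hν⟩) = rect n (tau n)

/-- The kernel congruence of the factorization map `λ ↦ Σ λ_i g_i`. -/
def kerCon {ν : ℕ} (g : Fin ν → ℕ) : AddCon (Fin ν → ℕ) where
  r a b := ∑ i, a i * g i = ∑ i, b i * g i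
  iseqv := ⟨fun _ => rfl, Eq.symm, Eq.trans⟩
  add' := by
    intro a b c d h1 h2
    simp only [Pi.add_apply, add_mul, Finset.sum_add_distrib]
    exact congrArg₂ (· + ·) h1 h2

/-- `S` is a complete intersection: it admits a presentation of cardinality `ν - 1`
(the cardinality of any minimal presentation equals `ν - 1`). -/
def CompleteIntersection (S : NumSgp) : Prop :=
  ∃ (ν : ℕ) (g : Fin ν → ℕ), S.MinGens g ∧
    ∃ ρ : Finset ((Fin ν → ℕ) × (Fin ν → ℕ)), ρ.card = ν - 1 ∧
      addConGen (fun a b => (a, b) ∈ ρ) = kerCon g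

end NumSgp

open NumSgp

/-!
Write `g_i = ∏_{j ≠ i} a_j`, so that `a_i g_i = ∏_j a_j` for every `i` and the multiplicity is
`g_0`. Modulo `a_k` (`k ≠ 0`) all generators but `g_k` vanish, while `g_k` is a unit; hence an
element `Σ λ_i g_i` with `λ_0 = 0` and `λ_k < a_k` has its coefficients determined modulo the
`a_k` by its class modulo `g_0`, and it is the least element of that class in `S`. Conversely
`a_i g_i = a_0 g_0` shows that no element of `Ap(S, g_0)` uses `a_i g_i`. So `Ap(S, g_0)` is the
rectangle with sides `a_i - 1`, and these are exactly the `α_i`.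
-/

namespace NumSgp

variable (S : NumSgp)

theorem mul_mem {x : ℕ} (hx : x ∈ S.carrier) (n : ℕ) : n * x ∈ S.carrier := by
  induction n with
  | zero => simpa using S.zero_mem
  | succ n ih => simpa [Nat.succ_mul] using S.add_mem _ ih _ hx

theorem sum_mul_mem {ι : Type*} {g : ι → ℕ} (hg : ∀ i, g i ∈ S.carrier) (lam : ι → ℕ)
    (s : Finset ι) : ∑ i ∈ s, lam i * g i ∈ S.carrier :=
  Finset.sum_induction _ (· ∈ S.carrier) (fun _ _ hp hq => S.add_mem _ hp _ hq) S.zero_mem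
    fun i _ => S.mul_mem (hg i) (lam i)

theorem exists_eq_sum_mul_of_mem {ν : ℕ} {g : Fin ν → ℕ}
    (hrange : Set.range g = {s | S.IsMinGen s}) {s : ℕ} (hs : s ∈ S.carrier) :
    ∃ lam : Fin ν → ℕ, s = ∑ i, lam i * g i := by
  induction s using Nat.strong_induction_on with
  | _ s ih =>
    rcases eq_or_ne s 0 with rfl | hs0
    · exact ⟨0, by simp⟩
    by_cases hmin : S.IsMinGen s
    · obtain ⟨i, rfl⟩ : s ∈ Set.range g := hrange ▸ hmin
      exact ⟨Pi.single i 1, by simp [Pi.single_apply]⟩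
    · obtain ⟨p, hp, q, hq, hp0, hq0, rfl⟩ := not_not.mp fun h => hmin ⟨hs, hs0, h⟩
      obtain ⟨lp, hlp⟩ := ih p (by omega) hp
      obtain ⟨lq, hlq⟩ := ih q (by omega) hq
      exact ⟨lp + lq, by simp only [Pi.add_apply, add_mul, Finset.sum_add_distrib, hlp, hlq]⟩

theorem mult_mem_and_ne_zero : S.mult ∈ S.carrier ∧ S.mult ≠ 0 := by
  refine Nat.sInf_mem (s := {s | s ∈ S.carrier ∧ s ≠ 0}) ?_
  obtain ⟨B, hB⟩ := S.cofinite.bddAbove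
  refine ⟨B + 1, not_not.mp fun h => ?_, by omega⟩
  have : B + 1 ≤ B := hB h
  omega

theorem mult_mem : S.mult ∈ S.carrier := S.mult_mem_and_ne_zero.1

theorem mult_ne_zero : S.mult ≠ 0 := S.mult_mem_and_ne_zero.2

theorem mult_le {x : ℕ} (hx : x ∈ S.carrier) (hx0 : x ≠ 0) : S.mult ≤ x :=
  Nat.sInf_le ⟨hx, hx0⟩

theorem isMinGen_mult : S.IsMinGen S.mult := by
  refine ⟨S.mult_mem, S.mult_ne_zero, ?_⟩
  rintro ⟨p, hp, q, hq, hp0, hq0, hpq⟩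
  have := S.mult_le hp hp0
  have := S.mult_le hq hq0
  omega

theorem MinGens.isMinGen {S : NumSgp} {ν : ℕ} {g : Fin ν → ℕ} (hg : S.MinGens g) (i : Fin ν) :
    S.IsMinGen (g i) :=
  (Set.ext_iff.mp hg.2 (g i)).mp (Set.mem_range_self i)

theorem MinGens.exists_mult_eq {S : NumSgp} {ν : ℕ} {g : Fin ν → ℕ} (hg : S.MinGens g) :
    ∃ i₀ : Fin ν, i₀.val = 0 ∧ S.mult = g i₀ := by
  obtain ⟨j, hj⟩ : S.mult ∈ Set.range g := hg.2 ▸ S.isMinGen_mult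
  let i₀ : Fin ν := ⟨0, j.pos⟩
  refine ⟨i₀, rfl, le_antisymm ?_ ?_⟩
  · exact S.mult_le (hg.isMinGen i₀).1 (hg.isMinGen i₀).2.1
  · exact hj ▸ hg.1.monotone (Nat.zero_le j.val)

theorem mem_apery_of_add_mem_apery {n s t : ℕ} (hs : s ∈ S.carrier) (ht : t ∈ S.carrier)
    (hst : s + t ∈ S.Apery n) : s ∈ S.Apery n :=
  ⟨hs, fun ⟨u, hu, hsu⟩ => hst.2 ⟨u + t, S.add_mem _ hu _ ht, by omega⟩⟩

theorem mul_not_mem_apery {n k : ℕ} (hn : n ∈ S.carrier) (hk : k ≠ 0) :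
    k * n ∉ S.Apery n := by
  obtain ⟨k, rfl⟩ := Nat.exists_eq_succ_of_ne_zero hk
  exact fun h => h.2 ⟨k * n, S.mul_mem hn k, Nat.succ_mul k n⟩

theorem mul_mem_apery_of_sum_mul_mem_apery {n ν : ℕ} {g : Fin ν → ℕ}
    (hg : ∀ i, g i ∈ S.carrier) {lam : Fin ν → ℕ} (h : ∑ i, lam i * g i ∈ S.Apery n)
    (i : Fin ν) : lam i * g i ∈ S.Apery n := by
  rw [← Finset.add_sum_erase _ _ (Finset.mem_univ i)] at h
  exact S.mem_apery_of_add_mem_apery (S.mul_mem (hg i) _) (S.sum_mul_mem hg lam _) h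

theorem alpha_eq_of_forall_mul_mem_apery_iff {ν : ℕ} {g : Fin ν → ℕ} {i : Fin ν} {c : ℕ}
    (h : ∀ k, k * g i ∈ S.Apery S.mult ↔ k ≤ c) : S.alpha g i = c := by
  have hset : {k | k * g i ∈ S.Apery S.mult} = Set.Iic c := Set.ext h
  rw [alpha, hset, csSup_Iic]

theorem rect_congr {ν : ℕ} (g : Fin ν → ℕ) {c c' : Fin ν → ℕ}
    (h : ∀ i : Fin ν, i.val ≠ 0 → c i = c' i) : rect g c = rect g c' := by
  have key : ∀ c c' : Fin ν → ℕ, (∀ i : Fin ν, i.val ≠ 0 → c i = c' i) →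
      rect g c ⊆ rect g c' := by
    rintro c c' h s ⟨lam, h0, hle, rfl⟩
    refine ⟨lam, h0, fun i => ?_, rfl⟩
    by_cases hi : i.val = 0
    · simp [h0 i hi]
    · exact h i hi ▸ hle i
  exact (key c c' h).antisymm (key c' c fun i hi => (h i hi).symm)

end NumSgp

section BettiGens

variable {ι : Type*} [Fintype ι] [DecidableEq ι] (a : ι → ℕ)

def bettiGens (i : ι) : ℕ := ∏ j ∈ Finset.univ.erase i, a j

theorem mul_bettiGens (i : ι) : a i * bettiGens a i = ∏ j, a j :=
  Finset.mul_prod_erase _ a (Finset.mem_univ i)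

theorem dvd_bettiGens {i k : ι} (hki : k ≠ i) : a k ∣ bettiGens a i :=
  Finset.dvd_prod_of_mem a (Finset.mem_erase.mpr ⟨hki, Finset.mem_univ k⟩)

theorem sum_mul_bettiGens_modEq (x : ι → ℕ) (k : ι) :
    ∑ i, x i * bettiGens a i ≡ x k * bettiGens a k [MOD a k] := by
  have hrest : a k ∣ ∑ i ∈ Finset.univ.erase k, x i * bettiGens a i :=
    Finset.dvd_sum fun i hi => (dvd_bettiGens a (Finset.ne_of_mem_erase hi).symm).mul_left _
  rw [← Finset.add_sum_erase _ _ (Finset.mem_univ k)]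
  simpa using Nat.ModEq.add_left (x k * bettiGens a k) (Nat.modEq_zero_iff_dvd.mpr hrest)

variable {a}

theorem coprime_bettiGens (hcop : ∀ i j, i ≠ j → Nat.Coprime (a i) (a j)) (k : ι) :
    Nat.Coprime (a k) (bettiGens a k) :=
  Nat.Coprime.prod_right fun j hj => hcop k j (Finset.ne_of_mem_erase hj).symm

theorem le_of_sum_mul_bettiGens_modEq (hcop : ∀ i j, i ≠ j → Nat.Coprime (a i) (a j))
    {lam mu : ι → ℕ} {k : ι}
    (h : ∑ i, mu i * bettiGens a i ≡ ∑ i, lam i * bettiGens a i [MOD a k]) (hk : lam k < a k) :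
    lam k ≤ mu k := by
  have hcoeff : mu k ≡ lam k [MOD a k] :=
    Nat.ModEq.cancel_right_of_coprime (coprime_bettiGens hcop k)
      ((sum_mul_bettiGens_modEq a mu k).symm.trans (h.trans (sum_mul_bettiGens_modEq a lam k)))
  calc lam k = mu k % a k := (Nat.mod_eq_of_lt hk).symm.trans hcoeff.symm
    _ ≤ mu k := Nat.mod_le _ _

end BettiGens

namespace NumSgp

variable {S : NumSgp} {ν : ℕ} {a : Fin ν → ℕ}

theorem rect_bettiGens_subset_apery (ha : ∀ i, a i ≠ 0)
    (hcop : ∀ i j, i ≠ j → Nat.Coprime (a i) (a j)) (hgen : S.MinGens (bettiGens a)) :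
    rect (bettiGens a) (fun i => a i - 1) ⊆ S.Apery S.mult := by
  obtain ⟨i₀, hi₀, hm⟩ := hgen.exists_mult_eq
  rintro s ⟨lam, hlam₀, hlam, rfl⟩
  refine ⟨S.sum_mul_mem (fun i => (hgen.isMinGen i).1) lam _, ?_⟩
  rintro ⟨t, ht, hst⟩
  obtain ⟨mu, rfl⟩ := S.exists_eq_sum_mul_of_mem hgen.2 ht
  have hle : ∀ k, lam k ≤ mu k := by
    intro k
    by_cases hk : k.val = 0
    · simp [hlam₀ k hk]
    have hdvd : a k ∣ S.mult := hm ▸ dvd_bettiGens a fun h => hk (h ▸ hi₀)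
    have hlt : lam k < a k := by
      have : lam k ≤ a k - 1 := hlam k
      have := ha k
      omega
    refine le_of_sum_mul_bettiGens_modEq hcop ?_ hlt
    rw [hst]
    simpa using (Nat.modEq_zero_iff_dvd.mpr hdvd).symm.add_left (∑ i, mu i * bettiGens a i)
  have hsum_le : ∑ i, lam i * bettiGens a i ≤ ∑ i, mu i * bettiGens a i :=
    Finset.sum_le_sum fun i _ => Nat.mul_le_mul_right (bettiGens a i) (hle i)
  have := S.mult_ne_zero
  omega

theorem lt_of_mul_bettiGens_mem_apery (ha : ∀ i, a i ≠ 0) (hgen : S.MinGens (bettiGens a))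
    {i : Fin ν} {h : ℕ} (hmem : h * bettiGens a i ∈ S.Apery S.mult) : h < a i := by
  obtain ⟨i₀, -, hm⟩ := hgen.exists_mult_eq
  by_contra! hle
  have hsplit : h * bettiGens a i = (h - a i) * bettiGens a i + a i₀ * S.mult := by
    rw [hm, mul_bettiGens, ← mul_bettiGens a i, ← add_mul, Nat.sub_add_cancel hle]
  rw [hsplit, add_comm] at hmem
  exact S.mul_not_mem_apery S.mult_mem (ha i₀)
    (S.mem_apery_of_add_mem_apery (S.mul_mem S.mult_mem _) (S.mul_mem (hgen.isMinGen i).1 _) hmem)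

theorem apery_subset_rect_bettiGens (ha : ∀ i, a i ≠ 0) (hgen : S.MinGens (bettiGens a)) :
    S.Apery S.mult ⊆ rect (bettiGens a) (fun i => a i - 1) := by
  obtain ⟨i₀, hi₀, hm⟩ := hgen.exists_mult_eq
  intro s hs
  obtain ⟨mu, rfl⟩ := S.exists_eq_sum_mul_of_mem hgen.2 hs.1
  have hmem := S.mul_mem_apery_of_sum_mul_mem_apery (fun i => (hgen.isMinGen i).1) hs
  have hmu₀ : ∀ i : Fin ν, i.val = 0 → mu i = 0 := by
    intro i hi
    obtain rfl : i = i₀ := Fin.ext (hi.trans hi₀.symm)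
    by_contra hne
    exact S.mul_not_mem_apery S.mult_mem hne (hm ▸ hmem i)
  exact ⟨mu, hmu₀, fun i => Nat.le_sub_one_of_lt (lt_of_mul_bettiGens_mem_apery ha hgen (hmem i)),
    rfl⟩

theorem alpha_bettiGens (ha : ∀ i, a i ≠ 0) (hcop : ∀ i j, i ≠ j → Nat.Coprime (a i) (a j))
    (hgen : S.MinGens (bettiGens a)) {i : Fin ν} (hi : i.val ≠ 0) :
    S.alpha (bettiGens a) i = a i - 1 := by
  refine S.alpha_eq_of_forall_mul_mem_apery_iff fun h => ⟨fun hmem => ?_, fun hh => ?_⟩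
  · have := lt_of_mul_bettiGens_mem_apery ha hgen hmem
    omega
  · apply rect_bettiGens_subset_apery ha hcop hgen
    refine ⟨Pi.single i h, fun j hj => ?_, fun j => ?_, by simp [Pi.single_apply]⟩
    · rw [Pi.single_apply, if_neg (Fin.ne_of_val_ne (by omega))]
    · rcases eq_or_ne j i with rfl | hji
      · simpa using hh
      · simp [hji]

end NumSgp

theorem stmt_9_general (S : NumSgp) (ν : ℕ) (a : Fin ν → ℕ) (ha : ∀ i, 1 < a i)
    (hcop : ∀ i j, i ≠ j → Nat.Coprime (a i) (a j))
    (hgen : S.MinGens fun i => ∏ j ∈ Finset.univ.erase i, a j) :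
    S.Apery S.mult = rect (fun i => ∏ j ∈ Finset.univ.erase i, a j)
      (S.alpha fun i => ∏ j ∈ Finset.univ.erase i, a j) := by
  change S.MinGens (bettiGens a) at hgen
  change S.Apery S.mult = rect (bettiGens a) (S.alpha (bettiGens a))
  have ha₀ : ∀ i, a i ≠ 0 := fun i => (Nat.zero_lt_of_lt (ha i)).ne'
  rw [(apery_subset_rect_bettiGens ha₀ hgen).antisymm (rect_bettiGens_subset_apery ha₀ hcop hgen)]
  exact rect_congr _ fun i hi => (alpha_bettiGens ha₀ hcop hgen hi).symm

/-- If `S` has a unique Betti element (minimal generators `g_i = Π_{j≠i} a_j` for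
pairwise coprime `a_1 > ⋯ > a_ν > 1`), then `S` has α-rectangular Apéry set. -/
theorem stmt_9 (S : NumSgp) (ν : ℕ) (a : Fin ν → ℕ) (ha : ∀ i, 1 < a i)
    (hanti : StrictAnti a) (hcop : ∀ i j, i ≠ j → Nat.Coprime (a i) (a j))
    (hgen : S.MinGens fun i => ∏ j ∈ Finset.univ.erase i, a j) :
    S.Apery S.mult = rect (fun i => ∏ j ∈ Finset.univ.erase i, a j)
      (S.alpha fun i => ∏ j ∈ Finset.univ.erase i, a j) :=
  stmt_9_general S ν a ha hcop hgen
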